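/- (Necessity) Let U be the output of Algorithm 1 (closed under Rules 1 and 2, starting from U(c) = ∞, U(x) = max edge weight + W otherwise). If there exist manipulator votes making c the unique Schulze winner of the combined profile, then U(x) > ω°(x,c) − W for all x ≠ c. -/

import Mathlib

/-!
Algorithm 1 maintains the invariant `S[ω](x, c) < U(x)` for all `x ≠ c`. Initially it holds
because `S[ω](x, c) < S[ω](c, x)` and every edge weight of `ω` is at most `ω° + W`, which bounds
the initial `U` from below. For a Rule 1 update at `x`, take a path `c → x` stronger than
`S[ω](x, c)`: every later vertex `b` on it reaches `c` through `x` with strength at least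
`S[ω](x, c)`, so `U(b) > S[ω](x, c)` and the path stays that strong after capping by `U`. For a
Rule 2 update `U(x) := U(y)`, the edge `y → x` has weight `ω(y, x) ≥ ω°(y, x) − W ≥ U(y)`, so
`S[ω](x, c) ≥ U(y)` would give `S[ω](y, c) ≥ U(y)`. At the end,
`ω°(x, c) − W ≤ ω(x, c) ≤ S[ω](x, c) < U(x)`.
-/

open scoped Classical

namespace Schulze

def pstr {X : Type} (ω : X → X → WithTop ℤ) : List X → WithTop ℤ
  | a :: b :: l => min (ω a b) (pstr ω (b :: l))
  | _ => ⊤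

def IsPath {X : Type} (x y : X) (p : List X) : Prop :=
  p.Nodup ∧ p.head? = some x ∧ p.getLast? = some y

noncomputable def S {X : Type} [Fintype X] [DecidableEq X]
    (ω : X → X → WithTop ℤ) (x y : X) : WithBot (WithTop ℤ) :=
  (Finset.univ.filter (fun p : {l : List X // l.Nodup} => IsPath x y p.1)).sup
    (fun p => ((pstr ω p.1 : WithTop ℤ) : WithBot (WithTop ℤ)))

def ofInt {X : Type} (ω : X → X → ℤ) : X → X → WithTop ℤ := fun x y => (ω x y : ℤ)

variable {X : Type}

section Strength

variable (ω : X → X → WithTop ℤ)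

lemma pstr_cons_cons (a b : X) (l : List X) :
    pstr ω (a :: b :: l) = min (ω a b) (pstr ω (b :: l)) := rfl

lemma pstr_cons_le (a : X) : ∀ l : List X, pstr ω (a :: l) ≤ pstr ω l
  | [] => le_rfl
  | _ :: _ => min_le_right _ _

lemma pstr_append_le (l₁ l₂ : List X) : pstr ω (l₁ ++ l₂) ≤ pstr ω l₂ := by
  induction l₁ with
  | nil => exact le_rfl
  | cons a l₁ ih => exact (pstr_cons_le ω a _).trans ih

lemma pstr_le_of_edge (l₁ : List X) (a b : X) (l₂ : List X) :
    pstr ω (l₁ ++ a :: b :: l₂) ≤ ω a b :=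
  (pstr_append_le ω l₁ _).trans (min_le_left _ _)

lemma lt_pstr_of_forall_edge {s : WithBot (WithTop ℤ)} (hs : s < ⊤) :
    ∀ p : List X, (∀ l₁ a b l₂, p = l₁ ++ a :: b :: l₂ → s < ω a b) → s < pstr ω p
  | [], _ => by simpa [pstr] using hs
  | [_], _ => by simpa [pstr] using hs
  | a :: b :: l, h => by
    rw [pstr_cons_cons, WithBot.coe_min, lt_min_iff]
    exact ⟨h [] a b l rfl, lt_pstr_of_forall_edge hs (b :: l)
      fun l₁ a' b' l₂ e => h (a :: l₁) a' b' l₂ (by rw [e]; rfl)⟩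

end Strength

section Path

variable {x y : X}

lemma isPath_singleton (x : X) : IsPath x x [x] := ⟨List.nodup_singleton x, rfl, rfl⟩

lemma isPath_pair (h : x ≠ y) : IsPath x y [x, y] := ⟨by simp [h], rfl, rfl⟩

lemma exists_isPath (x y : X) : ∃ p, IsPath x y p := by
  by_cases h : x = y
  · exact h ▸ ⟨[x], isPath_singleton x⟩
  · exact ⟨[x, y], isPath_pair h⟩

lemma isPath_cons_cons {a b : X} {l : List X} :
    IsPath a y (a :: b :: l) ↔ a ∉ b :: l ∧ IsPath b y (b :: l) := by
  simp [IsPath, List.nodup_cons, List.getLast?_cons_cons, and_assoc]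

lemma IsPath.eq_cons {p : List X} (hp : IsPath x y p) : ∃ l, p = x :: l := by
  obtain ⟨-, hhead, -⟩ := hp
  cases p with
  | nil => simp at hhead
  | cons a l => exact ⟨l, by simpa using hhead⟩

lemma IsPath.eq_of_singleton {a : X} (hp : IsPath x y [a]) : x = y := by
  obtain ⟨-, h₁, h₂⟩ := hp
  simp only [List.head?_cons, List.getLast?_singleton, Option.some.injEq] at h₁ h₂
  exact h₁ ▸ h₂

lemma IsPath.suffix {l₁ l₂ : List X} {b : X} (hp : IsPath x y (l₁ ++ b :: l₂)) :
    IsPath b y (b :: l₂) :=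
  ⟨hp.1.sublist (List.sublist_append_right _ _), rfl, by simpa using hp.2.2⟩

lemma IsPath.ne_of_edge {l₁ l₂ : List X} {a b : X} (hp : IsPath x y (l₁ ++ a :: b :: l₂)) :
    a ≠ b ∧ b ≠ x := by
  have hab : a ∉ b :: l₂ := (List.nodup_cons.1 (hp.1.sublist (List.sublist_append_right l₁ _))).1
  obtain ⟨t, ht⟩ := hp.eq_cons
  have hx : x ∉ t := List.nodup_cons.1 (ht ▸ hp.1) |>.1
  have hb : b ∈ t := by
    cases l₁ <;> simp only [List.nil_append, List.cons_append, List.cons.injEq] at ht <;>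
      simp [← ht.2]
  exact ⟨fun h => hab (h ▸ List.mem_cons_self), fun h => hx (h ▸ hb)⟩

lemma IsPath.exists_trans (ω : X → X → WithTop ℤ) {c : X} {q : List X} (hq : IsPath x c q)
    (m : WithTop ℤ) (hmq : m ≤ pstr ω q) :
    ∀ (l : List X) {b : X}, IsPath b x (b :: l) → m ≤ pstr ω (b :: l) →
      ∃ r, IsPath b c r ∧ m ≤ pstr ω r := by
  intro l
  induction l with
  | nil => exact fun hp _ => hp.eq_of_singleton ▸ ⟨q, hq, hmq⟩
  | cons b' l ih =>
    intro b hp hmp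
    obtain ⟨hb, hp'⟩ := isPath_cons_cons.1 hp
    obtain ⟨r', hr', hmr'⟩ := ih hp' (hmp.trans (pstr_cons_le ω b _))
    -- if `b` already lies on `r'`, cut `r'` at `b` instead of prepending it
    by_cases hbr : b ∈ r'
    · obtain ⟨l₁, l₂, rfl⟩ := List.append_of_mem hbr
      exact ⟨b :: l₂, hr'.suffix, hmr'.trans (pstr_append_le ω l₁ _)⟩
    · obtain ⟨t, rfl⟩ := hr'.eq_cons
      refine ⟨b :: b' :: t, isPath_cons_cons.2 ⟨hbr, hr'⟩, ?_⟩
      rw [pstr_cons_cons]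
      exact le_min (hmp.trans (min_le_left _ _)) hmr'

end Path

section Strongest

variable [Fintype X] [DecidableEq X] (ω : X → X → WithTop ℤ) {x y c : X}

lemma pstr_le_S {p : List X} (hp : IsPath x y p) : (pstr ω p : WithBot (WithTop ℤ)) ≤ S ω x y :=
  Finset.le_sup (b := ⟨p, hp.1⟩) (by simpa using hp)
    (s := Finset.univ.filter fun q : {l : List X // l.Nodup} => IsPath x y q.1)
    (f := fun q => ((pstr ω q.1 : WithTop ℤ) : WithBot (WithTop ℤ)))

lemma S_le {v : WithBot (WithTop ℤ)} (h : ∀ p, IsPath x y p → (pstr ω p : WithBot _) ≤ v) :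
    S ω x y ≤ v :=
  Finset.sup_le fun p hp => h p.1 (Finset.mem_filter.1 hp).2

lemma exists_isPath_S_eq (x y : X) : ∃ p, IsPath x y p ∧ S ω x y = pstr ω p := by
  obtain ⟨p₀, hp₀⟩ := exists_isPath x y
  obtain ⟨p, hp, hsup⟩ := Finset.exists_mem_eq_sup
    (Finset.univ.filter fun q : {l : List X // l.Nodup} => IsPath x y q.1)
    ⟨⟨p₀, hp₀.1⟩, by simpa using hp₀⟩
    (fun p : {l : List X // l.Nodup} => ((pstr ω p.1 : WithTop ℤ) : WithBot (WithTop ℤ)))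
  exact ⟨p.1, (Finset.mem_filter.1 hp).2, hsup⟩

lemma exists_lt_pstr_of_lt_S {v : WithBot (WithTop ℤ)} (h : v < S ω x y) :
    ∃ p, IsPath x y p ∧ v < pstr ω p := by
  obtain ⟨p, hp, hSp⟩ := exists_isPath_S_eq ω x y
  exact ⟨p, hp, hSp ▸ h⟩

lemma edge_le_S (h : x ≠ y) : (ω x y : WithBot (WithTop ℤ)) ≤ S ω x y := by
  simpa [pstr] using pstr_le_S ω (isPath_pair h)

lemma S_le_of_forall_edge_le (h : x ≠ y) {v : WithTop ℤ} (hv : ∀ a b, a ≠ b → ω a b ≤ v) :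
    S ω x y ≤ v :=
  S_le ω fun p hp => by
    obtain ⟨l, rfl⟩ := hp.eq_cons
    cases l with
    | nil => exact absurd hp.eq_of_singleton h
    | cons b l =>
      exact WithBot.coe_le_coe.2
        ((min_le_left _ _).trans (hv x b (IsPath.ne_of_edge (l₁ := []) hp).1))

lemma min_S_le_S (x y z : X) : min (S ω x y) (S ω y z) ≤ S ω x z := by
  obtain ⟨p, hp, hSp⟩ := exists_isPath_S_eq ω x y
  obtain ⟨q, hq, hSq⟩ := exists_isPath_S_eq ω y z
  obtain ⟨l, rfl⟩ := hp.eq_cons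
  obtain ⟨r, hr, hmr⟩ :=
    hq.exists_trans ω _ (min_le_right (pstr ω (x :: l)) _) l hp (min_le_left _ _)
  rw [hSp, hSq, ← WithBot.coe_min]
  exact (WithBot.coe_le_coe.2 hmr).trans (pstr_le_S ω hr)

lemma S_lt_S_capped {U : X → WithTop ℤ} {hi : X → X → WithTop ℤ}
    (hhi : ∀ a b, a ≠ b → ω a b ≤ hi a b) (hU : ∀ z, z ≠ c → S ω z c < U z)
    (hwin : S ω x c < S ω c x) :
    S ω x c < S (fun y z => min (hi y z) (U z)) c x := by
  obtain ⟨p, hp, hsp⟩ := exists_lt_pstr_of_lt_S ω hwin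
  refine (lt_pstr_of_forall_edge _ (hwin.trans_le le_top) p fun l₁ a b l₂ e => ?_).trans_le
    (pstr_le_S _ hp)
  subst e
  obtain ⟨hab, hbc⟩ := hp.ne_of_edge
  have hedge : S ω x c < ω a b := hsp.trans_le (WithBot.coe_le_coe.2 (pstr_le_of_edge ω l₁ a b l₂))
  have hp' : IsPath c x ((l₁ ++ [a]) ++ b :: l₂) := by simpa using hp
  -- the part of `p` after `b` is a path `b → x`, and the strongest path `x → c` extends it
  have hbx : S ω x c ≤ S ω b x :=
    calc S ω x c ≤ pstr ω ((l₁ ++ [a]) ++ b :: l₂) := by simpa using hsp.le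
      _ ≤ pstr ω (b :: l₂) := WithBot.coe_le_coe.2 (pstr_append_le ω _ _)
      _ ≤ S ω b x := pstr_le_S ω hp'.suffix
  have hbc' : S ω x c ≤ S ω b c := (le_min hbx le_rfl).trans (min_S_le_S ω b x c)
  rw [WithBot.coe_min, lt_min_iff]
  exact ⟨hedge.trans_le (WithBot.coe_le_coe.2 (hhi a b hab)), hbc'.trans_lt (hU b hbc)⟩

lemma S_lt_of_le_edge {u : WithTop ℤ} (hy : S ω y c < u) (hyx : y ≠ x) (hu : u ≤ ω y x) :
    S ω x c < u := by
  by_contra! h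
  refine hy.not_ge ?_
  calc (u : WithBot (WithTop ℤ)) ≤ min (S ω y x) (S ω x c) :=
        le_min ((WithBot.coe_le_coe.2 hu).trans (edge_le_S ω hyx)) h
    _ ≤ S ω y c := min_S_le_S ω y x c

end Strongest

lemma abs_sum_ite_neg_le {ι : Type} [Fintype ι] (p : ι → Prop) [DecidablePred p] (w : ι → ℕ) :
    |∑ i, if p i then (w i : ℤ) else -(w i : ℤ)| ≤ ∑ i, (w i : ℤ) :=
  (Finset.abs_sum_le_sum_abs _ _).trans_eq (Finset.sum_congr rfl fun i _ => by split_ifs <;> simp)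

theorem stmt15_general {X M : Type} [Fintype X] [Fintype M] [DecidableEq X]
    (ωo : X → X → ℤ)
    (w : M → ℕ) (W : ℤ) (hWdef : W = ∑ i : M, (w i : ℤ))
    (c : X)
    -- manipulator votes making c the unique Schulze winner of the combined profile
    (π : M → (X ≃ Fin (Fintype.card X)))
    (ω : X → X → ℤ)
    (hωdef : ∀ x y : X, x ≠ y → ω x y = ωo x y +
      ∑ i : M, (if (π i y : ℕ) < (π i x : ℕ) then (w i : ℤ) else -(w i : ℤ)))
    (hwin : ∀ y : X, y ≠ c → S (ofInt ω) y c < S (ofInt ω) c y)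
    -- a run of Algorithm 1
    (Us : ℕ → X → WithTop ℤ) (N : ℕ) (U : X → WithTop ℤ) (hU : U = Us N)
    (h0 : ∀ x : X, x ≠ c →
      (∃ y z : X, y ≠ z ∧ Us 0 x = ((ωo y z + W : ℤ) : WithTop ℤ)) ∧
      (∀ y z : X, y ≠ z → ((ωo y z + W : ℤ) : WithTop ℤ) ≤ Us 0 x))
    (hstep : ∀ t, t < N → ∃ x : X, x ≠ c ∧
      (∀ z : X, z ≠ x → Us (t + 1) z = Us t z) ∧
      ((S (fun y z => min (((ωo y z + W : ℤ) : WithTop ℤ)) (Us t z)) c x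
          < ((Us t x : WithBot (WithTop ℤ))) ∧
        ((Us (t + 1) x : WithBot (WithTop ℤ)))
          = S (fun y z => min (((ωo y z + W : ℤ) : WithTop ℤ)) (Us t z)) c x)
       ∨ (∃ y : X, y ≠ c ∧ Us t y < Us t x ∧
            Us t y ≤ ((ωo y x - W : ℤ) : WithTop ℤ) ∧
            Us (t + 1) x = Us t y))) :
    ∀ x : X, x ≠ c → ((ωo x c - W : ℤ) : WithTop ℤ) < U x := by
  have hdev : ∀ a b, a ≠ b → |ω a b - ωo a b| ≤ W := fun a b hab => by
    rw [hωdef a b hab, add_sub_cancel_left, hWdef]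
    exact abs_sum_ite_neg_le _ w
  have hup : ∀ a b, a ≠ b → ofInt ω a b ≤ ((ωo a b + W : ℤ) : WithTop ℤ) := fun a b hab =>
    WithTop.coe_le_coe.2 (by linarith [(abs_le.1 (hdev a b hab)).2])
  have hlow : ∀ a b, a ≠ b → ((ωo a b - W : ℤ) : WithTop ℤ) ≤ ofInt ω a b := fun a b hab =>
    WithTop.coe_le_coe.2 (by linarith [(abs_le.1 (hdev a b hab)).1])
  have hinv : ∀ t ≤ N, ∀ x, x ≠ c → S (ofInt ω) x c < Us t x := by
    intro t
    induction t with
    | zero =>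
      intro _ x hx
      exact (hwin x hx).trans_le <| S_le_of_forall_edge_le _ hx.symm fun a b hab =>
        (hup a b hab).trans ((h0 x hx).2 a b hab)
    | succ t ih =>
      intro ht z hz
      obtain ⟨x, -, hother, hrule⟩ := hstep t ht
      have hUt := ih (Nat.le_of_succ_le ht)
      rcases eq_or_ne z x with rfl | hzx
      · rcases hrule with ⟨-, heq⟩ | ⟨y, hyc, hlt, hle, heq⟩
        · exact heq ▸ S_lt_S_capped _ hup hUt (hwin z hz)
        · have hyz : y ≠ z := ne_of_apply_ne _ hlt.ne
          exact heq ▸ S_lt_of_le_edge _ (hUt y hyc) hyz (hle.trans (hlow y z hyz))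
      · exact hother z hzx ▸ hUt z hz
  intro x hx
  subst hU
  exact WithBot.coe_lt_coe.1 <|
    (WithBot.coe_le_coe.2 (hlow x c hx)).trans (edge_le_S _ hx) |>.trans_lt (hinv N le_rfl x hx)

theorem stmt15 {X M : Type} [Fintype X] [Fintype M] [DecidableEq X]
    (ωo : X → X → ℤ) (hskew : ∀ x y : X, x ≠ y → ωo x y = - ωo y x)
    (w : M → ℕ) (hw : ∀ i, 0 < w i) (W : ℤ) (hWdef : W = ∑ i : M, (w i : ℤ))
    (c : X)
    -- manipulator votes making c the unique Schulze winner of the combined profile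
    (π : M → (X ≃ Fin (Fintype.card X)))
    (ω : X → X → ℤ)
    (hωdef : ∀ x y : X, x ≠ y → ω x y = ωo x y +
      ∑ i : M, (if (π i y : ℕ) < (π i x : ℕ) then (w i : ℤ) else -(w i : ℤ)))
    (hwin : ∀ y : X, y ≠ c → S (ofInt ω) y c < S (ofInt ω) c y)
    -- a run of Algorithm 1
    (Us : ℕ → X → WithTop ℤ) (N : ℕ) (U : X → WithTop ℤ) (hU : U = Us N)
    (h0c : Us 0 c = ⊤)
    (h0 : ∀ x : X, x ≠ c →
      (∃ y z : X, y ≠ z ∧ Us 0 x = ((ωo y z + W : ℤ) : WithTop ℤ)) ∧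
      (∀ y z : X, y ≠ z → ((ωo y z + W : ℤ) : WithTop ℤ) ≤ Us 0 x))
    (hstep : ∀ t, t < N → ∃ x : X, x ≠ c ∧
      (∀ z : X, z ≠ x → Us (t + 1) z = Us t z) ∧
      ((S (fun y z => min (((ωo y z + W : ℤ) : WithTop ℤ)) (Us t z)) c x
          < ((Us t x : WithBot (WithTop ℤ))) ∧
        ((Us (t + 1) x : WithBot (WithTop ℤ)))
          = S (fun y z => min (((ωo y z + W : ℤ) : WithTop ℤ)) (Us t z)) c x)
       ∨ (∃ y : X, y ≠ c ∧ Us t y < Us t x ∧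
            Us t y ≤ ((ωo y x - W : ℤ) : WithTop ℤ) ∧
            Us (t + 1) x = Us t y)))
    -- U is closed under Rules 1 and 2
    (hR1 : ∀ x : X, x ≠ c →
      ((U x : WithBot (WithTop ℤ)))
        ≤ S (fun y z => min (((ωo y z + W : ℤ) : WithTop ℤ)) (U z)) c x)
    (hR2 : ¬ ∃ x y : X, x ≠ c ∧ y ≠ c ∧ U y < U x ∧ U y ≤ ((ωo y x - W : ℤ) : WithTop ℤ)) :
    ∀ x : X, x ≠ c → ((ωo x c - W : ℤ) : WithTop ℤ) < U x :=
  stmt15_general ωo w W hWdef c π ω hωdef hwin Us N U hU h0 hstep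

end Schulze
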